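/- Let M ∈ ℝ^{m×n} with m ≥ n, with nonzero columns v₁, …, v_n, and assume span{v₁, …, v_i} ≠ {0} for each 1 ≤ i ≤ n−1. Then V(M) = (∏_{i=1}^{n} ‖v_i‖₂) · ∏_{i=1}^{n−1} sin(∠⟨v_{i+1}, span{v₁, …, v_i}⟩). -/

import Mathlib

open Matrix

/-- Euclidean (ℓ₂) norm of a vector in `ℝ^m`. -/
noncomputable def norm2 {m : ℕ} (x : Fin m → ℝ) : ℝ := Real.sqrt (x ⬝ᵥ x)

/-- `Ω` is an `ε`-embedding of the subspace `V ⊆ ℝ^m`: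
`|⟨Ωx, Ωy⟩ − ⟨x, y⟩| ≤ ε‖x‖₂‖y‖₂` for all `x, y ∈ V`. -/
def IsEmbedding {d m : ℕ} (ε : ℝ) (Ω : Matrix (Fin d) (Fin m) ℝ)
    (V : Submodule ℝ (Fin m → ℝ)) : Prop :=
  ∀ x ∈ V, ∀ y ∈ V, |(Ω.mulVec x) ⬝ᵥ (Ω.mulVec y) - x ⬝ᵥ y| ≤ ε * norm2 x * norm2 y

/-- The `i`-th largest singular value (`0`-indexed) of a real matrix `A`:
the square root of the `i`-th largest eigenvalue of `AᵀA`. -/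
noncomputable def singularValues {m n : ℕ} (A : Matrix (Fin m) (Fin n) ℝ) (i : Fin n) : ℝ :=
  Real.sqrt ((show (Aᵀ * A).IsHermitian from Matrix.conjTranspose_eq_transpose_of_trivial A ▸ Matrix.isHermitian_conjTranspose_mul_self A).eigenvalues
    (Tuple.sort (show (Aᵀ * A).IsHermitian from Matrix.conjTranspose_eq_transpose_of_trivial A ▸ Matrix.isHermitian_conjTranspose_mul_self A).eigenvalues i.rev))

/-- `P` is a permutation matrix. -/
def IsPermMatrix {n : ℕ} (P : Matrix (Fin n) (Fin n) ℝ) : Prop :=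
  ∃ σ : Equiv.Perm (Fin n), P = σ.permMatrix ℝ

/-- `A = Q * [[R₁₁, R₁₂], [0, R₂₂]]` is a partial QR factorization with block size `k`,
where `A` is `(k+m') × (k+n')`, `Q` is orthogonal and `R₁₁` is `k × k` upper triangular. -/
def PartialQR {k m' n' : ℕ} (A : Matrix (Fin (k + m')) (Fin (k + n')) ℝ)
    (Q : Matrix (Fin (k + m')) (Fin (k + m')) ℝ)
    (R11 : Matrix (Fin k) (Fin k) ℝ) (R12 : Matrix (Fin k) (Fin n') ℝ)
    (R22 : Matrix (Fin m') (Fin n') ℝ) : Prop :=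
  Qᵀ * Q = 1 ∧ (∀ i j : Fin k, (j : ℕ) < (i : ℕ) → R11 i j = 0) ∧
    A = Q * (Matrix.reindex finSumFinEquiv finSumFinEquiv (Matrix.fromBlocks R11 R12 0 R22))

/-- `ω_i(A)`: the ℓ₂-norm of the `i`-th row of `A⁻¹`. -/
noncomputable def omega_ {k : ℕ} (A : Matrix (Fin k) (Fin k) ℝ) (i : Fin k) : ℝ :=
  norm2 (fun l => A⁻¹ i l)

/-- `γ_j(B)`: the ℓ₂-norm of the `j`-th column of `B`. -/
noncomputable def gamma_ {p q : ℕ} (B : Matrix (Fin p) (Fin q) ℝ) (j : Fin q) : ℝ :=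
  norm2 (fun l => B l j)

/-- `ρ(R, k)` for `R = [[R₁₁, R₁₂], [0, R₂₂]]`:
`max_{i,j} sqrt(((R₁₁⁻¹R₁₂)_{i,j})² + ω_i(R₁₁)²·γ_j(R₂₂)²)`. -/
noncomputable def rho {k m' n' : ℕ} (R11 : Matrix (Fin k) (Fin k) ℝ)
    (R12 : Matrix (Fin k) (Fin n') ℝ) (R22 : Matrix (Fin m') (Fin n') ℝ) : ℝ :=
  ⨆ i : Fin k, ⨆ j : Fin n',
    Real.sqrt (((R11⁻¹ * R12) i j) ^ 2 + (omega_ R11 i) ^ 2 * (gamma_ R22 j) ^ 2)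

/-- The volume of `A ∈ ℝ^{m×n}`: `V(A) = sqrt(det(AᵀA))`. -/
noncomputable def vol {m n : ℕ} (A : Matrix (Fin m) (Fin n) ℝ) : ℝ :=
  Real.sqrt (Matrix.det (Aᵀ * A))

/-- The angle between two vectors: `arccos(⟨u,w⟩/(‖u‖₂‖w‖₂))`. -/
noncomputable def angleVec {m : ℕ} (u w : Fin m → ℝ) : ℝ :=
  Real.arccos ((u ⬝ᵥ w) / (norm2 u * norm2 w))

/-- The angle between a vector and a subspace:
`arccos( max over nonzero u ∈ K of ⟨v,u⟩/(‖v‖₂‖u‖₂) )`. -/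
noncomputable def angleSub {m : ℕ} (v : Fin m → ℝ) (K : Submodule ℝ (Fin m → ℝ)) : ℝ :=
  Real.arccos (sSup {c : ℝ | ∃ u ∈ K, u ≠ 0 ∧ c = (v ⬝ᵥ u) / (norm2 v * norm2 u)})

/-- `P` is the orthogonal projector onto the subspace `K` (w.r.t. the dot product). -/
def IsOrthProj {m : ℕ} (K : Submodule ℝ (Fin m → ℝ))
    (P : (Fin m → ℝ) →ₗ[ℝ] (Fin m → ℝ)) : Prop :=
  (∀ v, P v ∈ K) ∧ (∀ u ∈ K, P u = u) ∧ (∀ v, ∀ u ∈ K, (v - P v) ⬝ᵥ u = 0)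

/-- Thin QR factorization `A = Q R` with `Q ∈ ℝ^{m×k}` having orthonormal columns and
`R ∈ ℝ^{k×k}` upper triangular. -/
def ThinQR {m k : ℕ} (A Q : Matrix (Fin m) (Fin k) ℝ) (R : Matrix (Fin k) (Fin k) ℝ) : Prop :=
  Qᵀ * Q = 1 ∧ (∀ a b : Fin k, (b : ℕ) < (a : ℕ) → R a b = 0) ∧ A = Q * R

/-- Frobenius norm of a real matrix. -/
noncomputable def frobNorm {p q : ℕ} (A : Matrix (Fin p) (Fin q) ℝ) : ℝ :=
  Real.sqrt (∑ i, ∑ j, A i j ^ 2)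

/-- Spectral norm of a real matrix: sup of `‖Ax‖₂` over the unit ball. -/
noncomputable def specNorm {p q : ℕ} (A : Matrix (Fin p) (Fin q) ℝ) : ℝ :=
  sSup {r : ℝ | ∃ x : Fin q → ℝ, norm2 x ≤ 1 ∧ r = norm2 (A.mulVec x)}

/- ===== auxiliary lemmas for stmt_7 ===== -/

open InnerProductSpace

instance myWF_aux {n : ℕ} : @WellFoundedLT (Fin n)
    (@Preorder.toLT _ (@PartialOrder.toPreorder _ (@SemilatticeInf.toPartialOrder _
      (@Lattice.toSemilatticeInf _ (@DistribLattice.toLattice _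
        (instDistribLatticeOfLinearOrder)))))) :=
  inferInstanceAs (WellFoundedLT (Fin n))

lemma norm2_eq_aux {m : ℕ} (x : EuclideanSpace ℝ (Fin m)) : norm2 x = ‖x‖ := by
  rw [norm2, EuclideanSpace.norm_eq]
  simp only [dotProduct]
  congr 1
  exact Finset.sum_congr rfl fun i _ => by rw [Real.norm_eq_abs, sq_abs, pow_two]

lemma dot_eq_inner_aux {m : ℕ} (x y : EuclideanSpace ℝ (Fin m)) :
    (x : Fin m → ℝ) ⬝ᵥ (y : Fin m → ℝ) = (inner ℝ x y : ℝ) := by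
  simp [PiLp.inner_apply, dotProduct, mul_comm]

/-- Key angle lemma: the sine of the angle between `v` and `K` equals
`‖g‖/‖v‖` where `g` is the component of `v` orthogonal to `K`. -/
lemma sin_angleSub_aux {m : ℕ} (v : EuclideanSpace ℝ (Fin m))
    (K : Submodule ℝ (EuclideanSpace ℝ (Fin m)))
    (hv : v ≠ 0) (hK : K ≠ ⊥) (g : EuclideanSpace ℝ (Fin m))
    (hp : v - g ∈ K) (hg : ∀ u ∈ K, (inner ℝ g u : ℝ) = 0) :
    Real.sin (angleSub v (K.map (WithLp.linearEquiv 2 ℝ (Fin m → ℝ)).toLinearMap)) = ‖g‖ / ‖v‖ := by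
  have hvn : (0:ℝ) < ‖v‖ := norm_pos_iff.mpr hv
  set p : EuclideanSpace ℝ (Fin m) := v - g with hpdef
  have hvpg : v = p + g := by simp [hpdef]
  have hpg : (inner ℝ p g : ℝ) = 0 := by
    have := hg p hp; rwa [real_inner_comm] at this
  have hpyth : ‖v‖ ^ 2 = ‖p‖ ^ 2 + ‖g‖ ^ 2 := by
    rw [hvpg, norm_add_sq_real, hpg]; ring
  set c : ℝ := ‖p‖ / ‖v‖ with hc
  have hgreat : IsGreatest {c : ℝ | ∃ u ∈ K, u ≠ 0 ∧ c = (v ⬝ᵥ u) / (norm2 v * norm2 u)} c := by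
    constructor
    · by_cases hp0 : p = 0
      · obtain ⟨u, huK, hu0⟩ := Submodule.exists_mem_ne_zero_of_ne_bot hK
        refine ⟨u, huK, hu0, ?_⟩
        have hd : v ⬝ᵥ u = 0 := by
          rw [dot_eq_inner_aux v u, hvpg, hp0, zero_add]; exact hg u huK
        rw [hd, zero_div, hc, hp0, norm_zero, zero_div]
      · have hpn : (0:ℝ) < ‖p‖ := norm_pos_iff.mpr hp0
        refine ⟨p, hp, hp0, ?_⟩
        have hd : v ⬝ᵥ p = ‖p‖ ^ 2 := by
          rw [dot_eq_inner_aux v p, hvpg, inner_add_left, hg p hp,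
            real_inner_self_eq_norm_sq, add_zero]
        rw [hd, norm2_eq_aux, norm2_eq_aux, hc]
        field_simp
    · rintro x ⟨u, huK, hu0, rfl⟩
      have hun : (0:ℝ) < ‖u‖ := norm_pos_iff.mpr hu0
      have h1 : v ⬝ᵥ u ≤ ‖p‖ * ‖u‖ := by
        have hd : v ⬝ᵥ u = (inner ℝ p u : ℝ) := by
          rw [dot_eq_inner_aux v u, hvpg, inner_add_left, hg u huK, add_zero]
        rw [hd]; exact real_inner_le_norm p u
      rw [norm2_eq_aux, norm2_eq_aux]
      have h2 : v ⬝ᵥ u / (‖v‖ * ‖u‖) ≤ (‖p‖ * ‖u‖) / (‖v‖ * ‖u‖) := by gcongr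
      rwa [mul_div_mul_right _ _ hun.ne'] at h2
  have hsup : sSup {c : ℝ | ∃ u ∈ K, u ≠ 0 ∧ c = (v ⬝ᵥ u) / (norm2 v * norm2 u)} = c :=
    hgreat.csSup_eq
  have hang : angleSub v (K.map (WithLp.linearEquiv 2 ℝ (Fin m → ℝ)).toLinearMap) = Real.arccos c := by
    rw [← hsup]; unfold angleSub; congr 1; congr 1; ext x; constructor
    · rintro ⟨u, ⟨w, hw, rfl⟩, hu0, rfl⟩
      exact ⟨w, hw, by rintro rfl; exact hu0 (map_zero _), rfl⟩
    · rintro ⟨w, hw, hw0, rfl⟩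
      exact ⟨_, ⟨w, hw, rfl⟩, (WithLp.linearEquiv 2 ℝ (Fin m → ℝ)).map_ne_zero_iff.mpr hw0, rfl⟩
  rw [hang, Real.sin_arccos]
  have h1c : 1 - c ^ 2 = ‖g‖ ^ 2 / ‖v‖ ^ 2 := by
    rw [hc, div_pow]
    field_simp
    nlinarith [hpyth]
  rw [h1c, ← div_pow, Real.sqrt_sq (by positivity)]

open Finset in
/-- Gram determinant as product of squared norms of the Gram–Schmidt vectors. -/
lemma my_gram_det_aux {m n : ℕ} (f : Fin n → EuclideanSpace ℝ (Fin m)) :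
    Matrix.det (Matrix.of fun a b => (inner ℝ (f a) (f b) : ℝ)) =
      ∏ t, ‖gramSchmidt ℝ f t‖ ^ 2 := by
  set g := gramSchmidt ℝ f with hgdef
  set U : Matrix (Fin n) (Fin n) ℝ :=
    Matrix.of fun i j => if i < j then (inner ℝ (g i) (f j) : ℝ) / ‖g i‖ ^ 2
      else if i = j then 1 else 0 with hU
  have hUtri : ∀ i j : Fin n, j < i → U i j = 0 := by
    intro i j hij
    simp [hU, not_lt_of_gt hij, (hij.ne).symm, hij.ne']
  have hrep : ∀ j, f j = ∑ i, U i j • g i := by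
    intro j
    have h0 : ∀ i ∈ univ, i ∉ Iic j → U i j • g i = 0 := by
      intro i _ hi
      rw [hUtri i j (by simpa using hi), zero_smul]
    rw [← Finset.sum_subset (subset_univ (Iic j)) h0]
    have : Iic j = insert j (Iio j) := by
      ext i; simp [le_iff_lt_or_eq, or_comm]
    rw [this, Finset.sum_insert (by simp)]
    have hUjj : U j j = 1 := by simp [hU]
    rw [hUjj, one_smul]
    have := gramSchmidt_def'' ℝ f j
    rw [this]
    congr 1
    apply Finset.sum_congr rfl
    intro i hi
    rw [Finset.mem_Iio] at hi
    simp [hU, hi, hgdef]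
  have hentry : ∀ a b, (inner ℝ (f a) (f b) : ℝ) = ∑ i, U i a * (‖g i‖ ^ 2 * U i b) := by
    intro a b
    conv_lhs => rw [hrep a, hrep b]
    rw [sum_inner]
    apply Finset.sum_congr rfl
    intro i _
    rw [inner_sum]
    rw [Finset.sum_eq_single i]
    · rw [real_inner_smul_left, real_inner_smul_right, real_inner_self_eq_norm_sq]
      ring
    · intro k _ hk
      rw [real_inner_smul_left, real_inner_smul_right,
        gramSchmidt_orthogonal ℝ f (Ne.symm hk)]
      ring
    · intro h; exact absurd (mem_univ i) h
  have hmat : (Matrix.of fun a b => (inner ℝ (f a) (f b) : ℝ)) =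
      Uᵀ * (Matrix.diagonal (fun i => ‖g i‖ ^ 2) * U) := by
    ext a b
    rw [Matrix.mul_apply]
    simp only [Matrix.of_apply, transpose_apply, Matrix.diagonal_mul]
    rw [hentry a b]
  rw [hmat, Matrix.det_mul, Matrix.det_mul, Matrix.det_transpose, Matrix.det_diagonal]
  have hdetU : U.det = 1 := by
    rw [Matrix.det_of_upperTriangular (fun i j hij => hUtri i j hij)]
    simp [hU]
  rw [hdetU]; ring

open Finset in
/-- Orthogonal decomposition from Gram–Schmidt. -/
lemma my_decomp_aux {m n : ℕ} (f : Fin n → EuclideanSpace ℝ (Fin m)) (t : Fin n) :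
    f t - gramSchmidt ℝ f t ∈ Submodule.span ℝ (f '' Set.Iio t) ∧
    ∀ u ∈ Submodule.span ℝ (f '' Set.Iio t), (inner ℝ (gramSchmidt ℝ f t) u : ℝ) = 0 := by
  constructor
  · have h1 : f t - gramSchmidt ℝ f t =
        ∑ i ∈ Iio t, (ℝ ∙ gramSchmidt ℝ f i).starProjection (f t) := by
      rw [gramSchmidt_def ℝ f t, sub_sub_cancel]
    rw [h1]
    refine Submodule.sum_mem _ fun i hi => ?_
    rw [Finset.mem_Iio] at hi
    have hgi : gramSchmidt ℝ f i ∈ Submodule.span ℝ (f '' Set.Iio t) :=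
      Submodule.span_mono (Set.image_mono fun x hx =>
        lt_of_le_of_lt (Set.mem_Iic.mp hx) hi) (gramSchmidt_mem_span ℝ f le_rfl)
    exact (Submodule.span_singleton_le_iff_mem _ _).mpr hgi (Submodule.starProjection_apply_mem _ _)
  · intro u hu
    rw [← span_gramSchmidt_Iio ℝ f t] at hu
    have : u ∈ (ℝ ∙ gramSchmidt ℝ f t)ᗮ := by
      refine Submodule.span_le.mpr ?_ hu
      rintro w ⟨i, hi, rfl⟩
      exact Submodule.mem_orthogonal_singleton_iff_inner_right.mpr
        (gramSchmidt_orthogonal ℝ f (ne_of_gt hi))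
    exact Submodule.mem_orthogonal_singleton_iff_inner_right.mp this

/-- the volume as the product of column norms times the product of sines of
angles between each column and the span of the preceding columns. -/
theorem stmt_7 {m n : ℕ} (hmn : n ≤ m) (M : Matrix (Fin m) (Fin n) ℝ)
    (hcols : ∀ j : Fin n, (fun r => M r j) ≠ 0)
    (hspan : ∀ t : Fin n, 1 ≤ (t : ℕ) →
      Submodule.span ℝ
        {w : Fin m → ℝ | ∃ l : Fin n, (l : ℕ) < (t : ℕ) ∧ w = fun r => M r l} ≠ ⊥) :
    vol M = (∏ j : Fin n, norm2 (fun r => M r j)) *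
      ∏ t : Fin n, (if (t : ℕ) = 0 then 1 else
        Real.sin (angleSub (fun r => M r t)
          (Submodule.span ℝ
            {w : Fin m → ℝ | ∃ l : Fin n, (l : ℕ) < (t : ℕ) ∧ w = fun r => M r l}))) := by
    classical
  set f : Fin n → EuclideanSpace ℝ (Fin m) := fun j => WithLp.toLp 2 (fun r => M r j) with hf
  set g : Fin n → EuclideanSpace ℝ (Fin m) := gramSchmidt ℝ f with hg
  have hset : ∀ t : Fin n,
      {w : Fin m → ℝ | ∃ l : Fin n, (l : ℕ) < (t : ℕ) ∧ w = fun r => M r l} =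
        (WithLp.linearEquiv 2 ℝ (Fin m → ℝ)).toLinearMap '' (f '' Set.Iio t) := by
    intro t
    ext w
    constructor
    · rintro ⟨l, hl, rfl⟩
      exact ⟨f l, ⟨l, hl, rfl⟩, rfl⟩
    · rintro ⟨_, ⟨l, hl, rfl⟩, rfl⟩
      exact ⟨l, hl, rfl⟩
  have hfne : ∀ t, f t ≠ 0 := fun t h => hcols t (by simpa [hf] using congrArg WithLp.ofLp h)
  have hfn : ∀ t : Fin n, (0:ℝ) < ‖f t‖ := fun t => norm_pos_iff.mpr (hfne t)
  have hMM : Mᵀ * M = Matrix.of (fun a b => (inner ℝ (f a) (f b) : ℝ)) := by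
    ext a b
    rw [Matrix.of_apply, ← dot_eq_inner_aux (f a) (f b), Matrix.mul_apply]
    simp [dotProduct, Matrix.transpose_apply, hf]
  have hvol : vol M = ∏ t, ‖g t‖ := by
    unfold vol
    rw [hMM, my_gram_det_aux f, ← hg]
    rw [show (∏ t, ‖g t‖ ^ 2) = (∏ t, ‖g t‖) ^ 2 from Finset.prod_pow _ _ _]
    exact Real.sqrt_sq (Finset.prod_nonneg fun t _ => norm_nonneg _)
  rw [hvol, ← Finset.prod_mul_distrib]
  refine (Finset.prod_congr rfl fun t _ => ?_).symm
  by_cases ht : (t : ℕ) = 0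
  · have hIio : Finset.Iio t = ∅ := by
      ext i
      simp only [Finset.mem_Iio, Finset.notMem_empty, iff_false]
      intro hi
      exact absurd (Fin.lt_def.mp hi) (by omega)
    have hgt : g t = f t := by
      rw [hg, gramSchmidt_def ℝ f t, hIio, Finset.sum_empty, sub_zero]
    rw [if_pos ht, mul_one, hgt]
    exact norm2_eq_aux (f t)
  · rw [if_neg ht]
    have h1 : 1 ≤ (t : ℕ) := Nat.one_le_iff_ne_zero.mpr ht
    have hKne : Submodule.span ℝ (f '' Set.Iio t) ≠ ⊥ := by
      have h2 := hspan t h1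
      rw [hset t, Submodule.span_image] at h2
      intro h; rw [h, Submodule.map_bot] at h2; exact h2 rfl
    obtain ⟨hp, hgo⟩ := my_decomp_aux f t
    have hsin : Real.sin (angleSub (fun r => M r t)
        (Submodule.span ℝ
          {w : Fin m → ℝ | ∃ l : Fin n, (l : ℕ) < (t : ℕ) ∧ w = fun r => M r l})) =
        ‖g t‖ / ‖f t‖ := by
      rw [hset t, Submodule.span_image]
      exact sin_angleSub_aux (f t) (Submodule.span ℝ (f '' Set.Iio t)) (hfne t) hKne (g t)
        hp hgo
    rw [hsin]
    have hn2 : norm2 (fun r => M r t) = ‖f t‖ := norm2_eq_aux (f t)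
    rw [hn2, ← mul_div_assoc]
    exact mul_div_cancel_left₀ _ (hfn t).ne'
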